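/- Energy identity for bandlimited functions: if f : ℝ → ℝ is bandlimited, then the family n ↦ f(n)² indexed by n ∈ ℤ is summable and ∑_{n∈ℤ} f(n)² = ∫_ℝ f(x)² dx. (Hence the RKHS norm induced by the sinc kernel on the space of bandlimited functions coincides with the L² norm.) -/

import Mathlib

/-!
Write `F x = (f x : ℂ)`. Its Fourier transform `𝓕 F` is continuous and supported in
`[-1/2, 1/2]`, hence integrable, so Fourier inversion gives `f n = 𝓕⁻ (𝓕 F) n`; these are exactly
the Fourier coefficients of `𝓕 F` regarded as a function on the circle `ℝ/ℤ`. Parseval's identity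
on the circle turns `∑ f(n)²` into `∫ ‖𝓕 F‖²`, and Plancherel's identity on `ℝ` (valid for
continuous integrable `F` with integrable `𝓕 F`) turns that into `∫ f²`.
-/

open MeasureTheory

/-- The sinc function: `sinc 0 = 1`, `sinc t = sin (π t) / (π t)` otherwise. -/
noncomputable def sinc (t : ℝ) : ℝ :=
  if t = 0 then 1 else Real.sin (Real.pi * t) / (Real.pi * t)

/-- `f : ℝ → ℝ` is bandlimited (to the band `[−1/2, 1/2]`) if it is continuous,
integrable, square-integrable, and its Fourier transform
`𝓕f(ξ) = ∫ f(x) e^{−2πi x ξ} dx` vanishes for `|ξ| > 1/2`. -/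
def Bandlimited (f : ℝ → ℝ) : Prop :=
  Continuous f ∧ Integrable f ∧ MemLp f 2 ∧
    ∀ ξ : ℝ, 1 / 2 < |ξ| →
      (∫ x : ℝ, (f x : ℂ) * Complex.exp (-2 * Real.pi * Complex.I * x * ξ)) = 0

open Set Function
open scoped FourierTransform InnerProductSpace

section Plancherel

variable {V H : Type*} [NormedAddCommGroup V] [InnerProductSpace ℝ V] [MeasurableSpace V]
  [BorelSpace V] [FiniteDimensional ℝ V]
  [NormedAddCommGroup H] [InnerProductSpace ℂ H]

theorem MeasureTheory.Integrable.continuous_fourier {f : V → H} (hf : Integrable f) :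
    Continuous (𝓕 f) :=
  VectorFourier.fourierIntegral_continuous Real.continuous_fourierChar continuous_inner hf

theorem Continuous.integral_norm_sq_fourier [CompleteSpace H] {f : V → H} (hc : Continuous f)
    (hf : Integrable f) (hFf : Integrable (𝓕 f)) : ∫ ξ, ‖𝓕 f ξ‖ ^ 2 = ∫ x, ‖f x‖ ^ 2 := by
  have h : ∫ ξ, ⟪𝓕 f ξ, 𝓕 f ξ⟫_ℂ = ∫ x, ⟪f x, 𝓕⁻ (𝓕 f) x⟫_ℂ := by
    have := VectorFourier.integral_sesq_fourierIntegral_eq_neg_flip (innerSL ℂ)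
      (L := innerₗ V) Real.continuous_fourierChar continuous_inner hf hFf
    rwa [flip_innerₗ] at this
  rw [hc.fourierInv_fourier_eq hf hFf] at h
  apply Complex.ofRealLI.injective
  simpa [← LinearIsometry.integral_comp_comm, inner_self_eq_norm_sq_to_K] using h

end Plancherel

section Sampling

variable {a b : ℝ}

theorem intervalIntegral_eq_integral_of_support_subset_Icc {F : Type*} [NormedAddCommGroup F]
    [NormedSpace ℝ F] {g : ℝ → F} (hab : a ≤ b) (hg : support g ⊆ Icc a b) : ∫ x in a..b, g x = ∫ x, g x := by
  rw [intervalIntegral.integral_of_le hab, ← integral_Icc_eq_integral_Ioc]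
  exact setIntegral_eq_integral_of_forall_compl_eq_zero fun x hx ↦
    notMem_support.mp fun h ↦ hx (hg h)

variable {E : Type*} [NormedAddCommGroup E] [NormedSpace ℂ E]

theorem fourierCoeffOn_eq_fourier {g : ℝ → E} (hab : a < b) (hg : support g ⊆ Icc a b) (n : ℤ) :
    fourierCoeffOn hab g n = (b - a)⁻¹ • 𝓕 g (n / (b - a)) := by
  have hsupp : support (fun x : ℝ ↦ fourier (-n) (x : AddCircle (b - a)) • g x) ⊆ Icc a b :=
    (support_smul_subset_right _ _).trans hg
  rw [fourierCoeffOn_eq_integral, one_div,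
    intervalIntegral_eq_integral_of_support_subset_Icc hab.le hsupp,
    Real.fourier_real_eq_integral_exp_smul]
  congr with x
  rw [fourier_coe_apply]
  congr 2
  push_cast
  ring

theorem fourierCoeffOn_neg_eq_fourierInv {g : ℝ → E} (hab : a < b) (hg : support g ⊆ Icc a b)
    (n : ℤ) : fourierCoeffOn hab g (-n) = (b - a)⁻¹ • 𝓕⁻ g (n / (b - a)) := by
  rw [fourierCoeffOn_eq_fourier hab hg, Real.fourierInv_eq_fourier_neg, Int.cast_neg, neg_div]

theorem hasSum_sq_fourierInv_intCast_div {g : ℝ → ℂ} (hab : a < b) (hg : support g ⊆ Icc a b)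
    (hg2 : MemLp g 2 (volume.restrict (Ioc a b))) :
    HasSum (fun n : ℤ ↦ ‖𝓕⁻ g (n / (b - a))‖ ^ 2) ((b - a) * ∫ x, ‖g x‖ ^ 2) := by
  have hba : b - a ≠ 0 := (sub_pos.mpr hab).ne'
  have hcoeff (n : ℤ) :
      (b - a) ^ 2 * ‖fourierCoeffOn hab g (-n)‖ ^ 2 = ‖𝓕⁻ g (n / (b - a))‖ ^ 2 := by
    rw [fourierCoeffOn_neg_eq_fourierInv hab hg, norm_smul, norm_inv, Real.norm_eq_abs, mul_pow,
      inv_pow, sq_abs]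
    field_simp
  have hsupp : support (fun x ↦ ‖g x‖ ^ 2) ⊆ Icc a b := fun x hx ↦ hg fun h ↦ hx (by simp [h])
  have h := ((Equiv.neg ℤ).hasSum_iff.mpr (hasSum_sq_fourierCoeffOn hab hg2)).mul_left ((b - a) ^ 2)
  simp only [comp_apply, Equiv.neg_apply, hcoeff,
    intervalIntegral_eq_integral_of_support_subset_Icc hab.le hsupp, smul_eq_mul] at h
  rwa [← mul_assoc, sq, mul_inv_cancel_right₀ hba] at h

end Sampling

theorem Bandlimited.support_fourier_subset {f : ℝ → ℝ} (hf : Bandlimited f) :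
    support (𝓕 fun x ↦ (f x : ℂ)) ⊆ Icc (-(1 / 2)) (1 / 2) := by
  obtain ⟨-, -, -, hband⟩ := hf
  intro ξ hξ
  by_contra hout
  refine hξ <| (Real.fourier_real_eq_integral_exp_smul _ ξ).trans <|
    .trans ?_ (hband ξ (not_le.mp (abs_le.not.mpr hout)))
  congr 1 with x
  rw [smul_eq_mul, mul_comm]
  push_cast
  ring_nf

theorem bandlimited_energy_identity (f : ℝ → ℝ) (hf : Bandlimited f) :
    Summable (fun n : ℤ => (f n) ^ 2) ∧
      (∑' n : ℤ, (f n) ^ 2) = ∫ x : ℝ, (f x) ^ 2 := by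
  have hsupp := hf.support_fourier_subset
  obtain ⟨hc, hi, -⟩ := hf
  set F : ℝ → ℂ := fun x ↦ (f x : ℂ)
  have hFc : Continuous F := Complex.continuous_ofReal.comp hc
  have hFi : Integrable F := hi.ofReal
  have hcs : HasCompactSupport (𝓕 F) := .intro isCompact_Icc fun ξ hξ ↦
    notMem_support.mp fun h ↦ hξ (hsupp h)
  have hFFc : Continuous (𝓕 F) := hFi.continuous_fourier
  have hFFi : Integrable (𝓕 F) := hFFc.integrable_of_hasCompactSupport hcs
  have h := hasSum_sq_fourierInv_intCast_div (by norm_num) hsupp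
    ((hFFc.memLp_of_hasCompactSupport hcs).restrict _)
  rw [hFc.fourierInv_fourier_eq hFi hFFi, hFc.integral_norm_sq_fourier hFi hFFi] at h
  have hlen : (1 / 2 : ℝ) - -(1 / 2) = 1 := by norm_num
  simp only [hlen, div_one, one_mul, F, Complex.norm_real, Real.norm_eq_abs, sq_abs] at h
  exact ⟨h.summable, h.tsum_eq⟩
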